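/- Let f be a piecewise contracting interval map on X satisfying the separation property. Then for every n ≥ 1, an atom of generation n determines its code: if A_{i_1…i_n}, A_{j_1…j_n} ∈ 𝒜_n satisfy A_{i_1…i_n} = A_{j_1…j_n}, then (i_1,…,i_n) = (j_1,…,j_n). -/

import Mathlib

open Set Filter Metric Topology

/-- A piecewise contracting interval map (PCIM) on the compact interval `X = [a,b]`:
there are `N ≥ 1` pairwise disjoint nonempty open (relative to `X`) subintervals
whose closures cover `X`, and `f` contracts with rate `lam ∈ (0,1)` on each piece. -/
structure PCIM where
  a : ℝ
  b : ℝ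
  hab : a < b
  N : ℕ
  hN : 1 ≤ N
  f : ℝ → ℝ
  lam : ℝ
  hlam₀ : 0 < lam
  hlam₁ : lam < 1
  piece : Fin N → Set ℝ
  piece_nonempty : ∀ i, (piece i).Nonempty
  piece_interval : ∀ i, ∃ c d : ℝ, piece i = Set.Ioo c d ∩ Set.Icc a b
  piece_disjoint : ∀ i j, i ≠ j → Disjoint (piece i) (piece j)
  cover : Set.Icc a b = ⋃ i, closure (piece i)
  mapsTo : Set.MapsTo f (Set.Icc a b) (Set.Icc a b)
  contract : ∀ i, ∀ x ∈ piece i, ∀ y ∈ piece i, |f x - f y| ≤ lam * |x - y|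

namespace PCIM

variable (P : PCIM)

/-- The underlying compact interval `X`. -/
def X : Set ℝ := Set.Icc P.a P.b

/-- `X* = ⋃ i, X_i`, the union of the contraction pieces. -/
def Xstar : Set ℝ := ⋃ i, P.piece i

/-- `Δ = X \ X*`, the set of boundaries of the contraction pieces. -/
def Delta : Set ℝ := P.X \ P.Xstar

/-- `X̃ = ⋂_{j ≥ 0} f⁻ʲ(X*)`, the points all of whose iterates are well defined. -/
def Xtilde : Set ℝ := ⋂ j : ℕ, (P.f^[j]) ⁻¹' P.Xstar

/-- `D`: the set of one-sided limits of `f` at the points of `Δ`. -/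
def D : Set ℝ :=
  {L | ∃ c ∈ P.Delta,
    ((𝓝[P.X ∩ Set.Iio c] c).NeBot ∧ Filter.Tendsto P.f (𝓝[P.X ∩ Set.Iio c] c) (𝓝 L)) ∨
    ((𝓝[P.X ∩ Set.Ioi c] c).NeBot ∧ Filter.Tendsto P.f (𝓝[P.X ∩ Set.Ioi c] c) (𝓝 L))}

/-- A set `A` is `f`-pseudo-invariant if for every `x ∈ A` at least one of the
one-sided limits of `f` at `x` belongs to `A`. -/
def PseudoInvariant (A : Set ℝ) : Prop :=
  ∀ x ∈ A,
    (∃ L ∈ A, (𝓝[P.X ∩ Set.Iio x] x).NeBot ∧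
      Filter.Tendsto P.f (𝓝[P.X ∩ Set.Iio x] x) (𝓝 L)) ∨
    (∃ L ∈ A, (𝓝[P.X ∩ Set.Ioi x] x).NeBot ∧
      Filter.Tendsto P.f (𝓝[P.X ∩ Set.Ioi x] x) (𝓝 L))

/-- `f` is piecewise monotonic: strictly monotone on each contraction piece. -/
def PiecewiseMonotonic : Prop :=
  ∀ i, StrictMonoOn P.f (P.piece i) ∨ StrictAntiOn P.f (P.piece i)

/-- `f` satisfies the separation property: it is piecewise monotonic and the closures
of the images of distinct pieces are disjoint. -/
def SeparationProperty : Prop :=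
  P.PiecewiseMonotonic ∧
    ∀ i j, i ≠ j → closure (P.f '' P.piece i) ∩ closure (P.f '' P.piece j) = ∅

/-- The iterates `Λ_n` defining the attractor: `Λ_0 = X`,
`Λ_{n+1} = cl (f (Λ_n \ Δ))`. -/
def LambdaIter : (P : PCIM) → ℕ → Set ℝ
  | Q, 0 => Q.X
  | Q, n + 1 => closure (Q.f '' (LambdaIter Q n \ Q.Delta))

/-- The attractor `Λ = ⋂_{n ≥ 1} Λ_n`. -/
def Lambda : Set ℝ := ⋂ n : ℕ, P.LambdaIter (n + 1)

/-- The atom associated to the word `w = [i₁, …, iₙ]`: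
`A_{i₁…iₙ} = F_{iₙ} ∘ ⋯ ∘ F_{i₁}(X)` where `F_i(A) = cl (f (A ∩ X_i))`. -/
def atomOf (w : List (Fin P.N)) : Set ℝ :=
  w.foldl (fun A i => closure (P.f '' (A ∩ P.piece i))) P.X

/-- `𝒜_n`: the set of (nonempty) atoms of generation `n`. -/
def atoms (n : ℕ) : Set (Set ℝ) :=
  {A | ∃ w : List (Fin P.N), w.length = n ∧ P.atomOf w = A ∧ A.Nonempty}

/-- `θ` is the itinerary of `x`: `f^t(x) ∈ X_{θ_t}` for all `t`. -/
def IsItinerary (x : ℝ) (θ : ℕ → Fin P.N) : Prop :=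
  ∀ t : ℕ, P.f^[t] x ∈ P.piece (θ t)

/-- The word `θ_t θ_{t+1} … θ_{t+n-1}` of length `n` of the sequence `θ`. -/
def word (θ : ℕ → Fin P.N) (t n : ℕ) : List (Fin P.N) :=
  (List.range n).map fun k => θ (t + k)

/-- `L_n(θ)`: the set of words of length `n` occurring in `θ`. -/
def lang (θ : ℕ → Fin P.N) (n : ℕ) : Set (List (Fin P.N)) :=
  {w | ∃ t : ℕ, w = P.word θ t n}

/-- The complexity function `p_θ(n) = #L_n(θ)`. -/
noncomputable def complexity (θ : ℕ → Fin P.N) (n : ℕ) : ℕ := (P.lang θ n).ncard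

/-- The forward orbit of `x` under `f`. -/
def orbit (x : ℝ) : Set ℝ := {y | ∃ k : ℕ, P.f^[k] x = y}

/-- The ω-limit set of `x` under `f`. -/
def omegaLimitSet (x : ℝ) : Set ℝ :=
  ⋂ n : ℕ, closure {y | ∃ m : ℕ, n ≤ m ∧ P.f^[m] x = y}

/-- A compact pseudo-invariant set `A` is `X̃`-minimal if the orbit of every point
of `A ∩ X̃` is dense in `A`. -/
def XtildeMinimal (A : Set ℝ) : Prop :=
  IsCompact A ∧ P.PseudoInvariant A ∧ ∀ x ∈ A ∩ P.Xtilde, A ⊆ closure (P.orbit x)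

/-- A periodic orbit contained in `X̃`. -/
def IsPeriodicOrbit (A : Set ℝ) : Prop :=
  ∃ x ∈ P.Xtilde, ∃ p : ℕ, 1 ≤ p ∧ P.f^[p] x = x ∧ A = P.orbit x

end PCIM

/-- A Cantor set: nonempty, compact, perfect and totally disconnected. -/
def IsCantorSet (A : Set ℝ) : Prop :=
  A.Nonempty ∧ IsCompact A ∧ Perfect A ∧ IsTotallyDisconnected A


/-!
Distinct words of the same length have disjoint atoms, by induction on the length. If the
last letters differ, the atoms lie in the closures of the images of two different pieces,
which are disjoint by separation. If they agree, the atoms are the closures of the images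
under `f` of two disjoint compact sets intersected with one piece; a map that is strictly
monotone on an interval cannot glue two such sets in the limit, since between a limit
point of the first and one of the second lies a subinterval whose image separates them.
-/

theorem IsCompact.exists_tendsto_of_mem_closure_image {α β : Type*} [TopologicalSpace α]
    [TopologicalSpace β] {f : α → β} {s K : Set α} (hK : IsCompact K) {z : β}
    (hz : z ∈ closure (f '' (K ∩ s))) :
    ∃ x ∈ K, ∃ l : Filter α, l.NeBot ∧ l ≤ 𝓝[s] x ∧ Tendsto f l (𝓝 z) := by
  set F := 𝓟 (K ∩ s) ⊓ comap f (𝓝 z)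
  have hF : F.NeBot := by
    rw [← map_neBot_iff f, Filter.push_pull, map_principal, inf_comm]
    exact mem_closure_iff_clusterPt.1 hz
  obtain ⟨x, hxK, hx⟩ := hK (f := F) (inf_le_left.trans (principal_mono.2 inter_subset_left))
  refine ⟨x, hxK, 𝓝 x ⊓ F, hx, le_inf inf_le_left ?_, ?_⟩
  · exact inf_le_right.trans (inf_le_left.trans (principal_mono.2 inter_subset_right))
  · exact tendsto_iff_comap.2 (inf_le_right.trans inf_le_right)

section StrictMonotone

variable {α β : Type*} [LinearOrder α] [TopologicalSpace α] [OrderTopology α] [DenselyOrdered α]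
  [LinearOrder β] [TopologicalSpace β] [OrderClosedTopology β] {f : α → β} {s : Set α}

theorem StrictMonoOn.lt_of_tendsto_of_le_nhdsWithin (hf : StrictMonoOn f s)
    (hs : s.OrdConnected) {l₁ l₂ : Filter α} [l₁.NeBot] [l₂.NeBot] {x y : α} {z₁ z₂ : β}
    (hl₁ : l₁ ≤ 𝓝[s] x) (hl₂ : l₂ ≤ 𝓝[s] y) (hf₁ : Tendsto f l₁ (𝓝 z₁))
    (hf₂ : Tendsto f l₂ (𝓝 z₂)) (hxy : x < y) : z₁ < z₂ := by
  obtain ⟨m₁, hxm₁, hm₁y⟩ := exists_between hxy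
  obtain ⟨m₂, hm₁m₂, hm₂y⟩ := exists_between hm₁y
  have hev₁ : ∀ᶠ a in l₁, a ∈ s ∧ a < m₁ :=
    hl₁ (inter_mem_nhdsWithin s (Iio_mem_nhds hxm₁))
  have hev₂ : ∀ᶠ b in l₂, b ∈ s ∧ m₂ < b :=
    hl₂ (inter_mem_nhdsWithin s (Ioi_mem_nhds hm₂y))
  obtain ⟨a, has, ham₁⟩ := hev₁.exists
  obtain ⟨b, hbs, hm₂b⟩ := hev₂.exists
  have hm₁ : m₁ ∈ s := hs.out has hbs ⟨ham₁.le, (hm₁m₂.trans hm₂b).le⟩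
  have hm₂ : m₂ ∈ s := hs.out has hbs ⟨(ham₁.trans hm₁m₂).le, hm₂b.le⟩
  calc z₁ ≤ f m₁ := le_of_tendsto hf₁ (hev₁.mono fun a ha ↦ (hf ha.1 hm₁ ha.2).le)
    _ < f m₂ := hf hm₁ hm₂ hm₁m₂
    _ ≤ z₂ := ge_of_tendsto hf₂ (hev₂.mono fun b hb ↦ (hf hm₂ hb.1 hb.2).le)

theorem Disjoint.closure_image_inter (hf : StrictMonoOn f s ∨ StrictAntiOn f s)
    (hs : s.OrdConnected) {K₁ K₂ : Set α} (hK₁ : IsCompact K₁) (hK₂ : IsCompact K₂)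
    (hd : Disjoint K₁ K₂) :
    Disjoint (closure (f '' (K₁ ∩ s))) (closure (f '' (K₂ ∩ s))) := by
  rw [disjoint_left]
  intro z hz₁ hz₂
  have separated : ∀ {x y : α} {l₁ l₂ : Filter α} [l₁.NeBot] [l₂.NeBot], x < y →
      l₁ ≤ 𝓝[s] x → l₂ ≤ 𝓝[s] y → Tendsto f l₁ (𝓝 z) → Tendsto f l₂ (𝓝 z) → False := by
    intro x y l₁ l₂ _ _ hxy hl₁ hl₂ hf₁ hf₂
    rcases hf with hmono | hanti
    · exact (hmono.lt_of_tendsto_of_le_nhdsWithin hs hl₁ hl₂ hf₁ hf₂ hxy).false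
    · exact (hanti.dual_right.lt_of_tendsto_of_le_nhdsWithin hs hl₁ hl₂ hf₁ hf₂ hxy).false
  obtain ⟨x, hxK, l₁, hl₁, hxl, hf₁⟩ := hK₁.exists_tendsto_of_mem_closure_image hz₁
  obtain ⟨y, hyK, l₂, hl₂, hyl, hf₂⟩ := hK₂.exists_tendsto_of_mem_closure_image hz₂
  rcases lt_or_gt_of_ne (hd.ne_of_mem hxK hyK) with hxy | hyx
  · exact separated hxy hxl hyl hf₁ hf₂
  · exact separated hyx hyl hxl hf₂ hf₁

end StrictMonotone

namespace PCIM

variable (P : PCIM)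

theorem piece_ordConnected (i : Fin P.N) : (P.piece i).OrdConnected := by
  obtain ⟨c, d, hcd⟩ := P.piece_interval i
  rw [hcd]
  exact ordConnected_Ioo.inter ordConnected_Icc

theorem atomOf_append_singleton (w : List (Fin P.N)) (i : Fin P.N) :
    P.atomOf (w ++ [i]) = closure (P.f '' (P.atomOf w ∩ P.piece i)) := by
  simp only [atomOf, List.foldl_append, List.foldl_cons, List.foldl_nil]

theorem atomOf_subset_X (w : List (Fin P.N)) : P.atomOf w ⊆ P.X := by
  induction w using List.reverseRecOn with
  | nil => exact subset_rfl
  | append_singleton w i ih =>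
    rw [atomOf_append_singleton]
    refine closure_minimal ?_ isClosed_Icc
    rintro _ ⟨x, hx, rfl⟩
    exact P.mapsTo (ih hx.1)

theorem isCompact_atomOf (w : List (Fin P.N)) : IsCompact (P.atomOf w) := by
  refine isCompact_Icc.of_isClosed_subset ?_ (P.atomOf_subset_X w)
  rcases w.eq_nil_or_concat with rfl | ⟨u, i, rfl⟩
  · exact isClosed_Icc
  · rw [List.concat_eq_append, atomOf_append_singleton]
    exact isClosed_closure

theorem disjoint_atomOf_of_ne (hsep : P.SeparationProperty) {w w' : List (Fin P.N)}
    (hlen : w.length = w'.length) (hne : w ≠ w') : Disjoint (P.atomOf w) (P.atomOf w') := by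
  induction w using List.reverseRecOn generalizing w' with
  | nil => exact absurd (List.length_eq_zero_iff.1 hlen.symm).symm hne
  | append_singleton u i ih =>
    rcases w'.eq_nil_or_concat with rfl | ⟨v, j, rfl⟩
    · simp at hlen
    rw [List.concat_eq_append] at hlen hne ⊢
    rw [atomOf_append_singleton, atomOf_append_singleton]
    by_cases hij : i = j
    · subst hij
      have huv : u ≠ v := fun h ↦ hne (h ▸ rfl)
      have hdisj := ih (by simpa using hlen) huv
      exact hdisj.closure_image_inter (hsep.1 i) (P.piece_ordConnected i)
        (P.isCompact_atomOf u) (P.isCompact_atomOf v)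
    · exact (disjoint_iff_inter_eq_empty.2 (hsep.2 i j hij)).mono
        (closure_mono (image_mono inter_subset_right))
        (closure_mono (image_mono inter_subset_right))

end PCIM

/-- Under the separation property, an atom of generation `n ≥ 1`
determines its code: equal atoms have equal words. -/
theorem atom_code_unique (P : PCIM) (hsep : P.SeparationProperty) :
    ∀ n : ℕ, 1 ≤ n → ∀ w w' : List (Fin P.N),
      w.length = n → w'.length = n →
      (P.atomOf w).Nonempty → (P.atomOf w').Nonempty →
      P.atomOf w = P.atomOf w' → w = w' := by
  intro n _ w w' hw hw' ⟨x, hx⟩ _ heq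
  by_contra hne
  exact disjoint_left.1 (P.disjoint_atomOf_of_ne hsep (hw.trans hw'.symm) hne) hx (heq ▸ hx)
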